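/- If X ∈ ℝ^{n×m} is (c_x,γ_x)-SED and Y ∈ ℝ^{m×p} is (c_y,γ_y)-SED (as block matrices over the same N agents), then the product XY is (N·c_x·c_y, γ)-SED, where γ = min(γ_x, γ_y). -/
import Mathlib


open Matrix
open scoped Matrix.Norms.L2Operator

/-- Operator (induced l2) norm of a real matrix. -/
noncomputable def opNorm {α β : Type*} [Fintype α] [Fintype β] [DecidableEq β]
    (X : Matrix α β ℝ) : ℝ :=
  ‖LinearMap.toContinuousLinearMap (Matrix.toEuclideanLin X)‖

/-- Block `(l,j)` of a block-partitioned matrix. -/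
def blk {N : ℕ} {n m : Fin N → ℕ}
    (X : Matrix ((l : Fin N) × Fin (n l)) ((j : Fin N) × Fin (m j)) ℝ)
    (l j : Fin N) : Matrix (Fin (n l)) (Fin (m j)) ℝ :=
  fun a b => X ⟨l, a⟩ ⟨j, b⟩

/-- Block row of agent `i`. -/
def blkRow {N : ℕ} {n m : Fin N → ℕ}
    (K : Matrix ((l : Fin N) × Fin (m l)) ((j : Fin N) × Fin (n j)) ℝ)
    (i : Fin N) : Matrix (Fin (m i)) ((j : Fin N) × Fin (n j)) ℝ :=
  fun a b => K ⟨i, a⟩ b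

/-- Zero-padded version of a diagonal block. -/
def pad {N : ℕ} {n : Fin N → ℕ} (i : Fin N) (M : Matrix (Fin (n i)) (Fin (n i)) ℝ) :
    Matrix ((l : Fin N) × Fin (n l)) ((j : Fin N) × Fin (n j)) ℝ :=
  fun a b => if ha : a.1 = i then (if hb : b.1 = i then M (ha ▸ a.2) (hb ▸ b.2) else 0) else 0

/-- κ-truncation relative to agent `i`. -/
noncomputable def trunc {N : ℕ} {n m : Fin N → ℕ} (dist : Fin N → Fin N → ℝ) (i : Fin N) (κ : ℝ)
    (X : Matrix ((l : Fin N) × Fin (n l)) ((j : Fin N) × Fin (m j)) ℝ) :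
    Matrix ((l : Fin N) × Fin (n l)) ((j : Fin N) × Fin (m j)) ℝ :=
  fun a b => if max (dist i a.1) (dist i b.1) < κ then X a b else 0

/-- `X` is `(c,γ)`-spatially exponentially decaying. -/
def IsSED {N : ℕ} {n m : Fin N → ℕ} (dist : Fin N → Fin N → ℝ) (c γ : ℝ)
    (X : Matrix ((l : Fin N) × Fin (n l)) ((j : Fin N) × Fin (m j)) ℝ) : Prop :=
  ∀ l j : Fin N, opNorm (blk X l j) ≤ c * Real.exp (-γ * dist l j)

/-- `X` is `(c,γ)`-SED away from agent `i`. -/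
def IsSEDAway {N : ℕ} {n m : Fin N → ℕ} (dist : Fin N → Fin N → ℝ) (i : Fin N) (c γ : ℝ)
    (X : Matrix ((l : Fin N) × Fin (n l)) ((j : Fin N) × Fin (m j)) ℝ) : Prop :=
  ∀ l j : Fin N, opNorm (blk X l j) ≤ c * Real.exp (-γ * max (dist i l) (dist i j))

/-- `X` is `(τ,ρ)`-stable. -/
def IsStable {α : Type*} [Fintype α] [DecidableEq α] (τ ρ : ℝ) (X : Matrix α α ℝ) : Prop :=
  ∀ k : ℕ, opNorm (X ^ k) ≤ τ * Real.exp (-ρ * (k : ℝ))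

lemma opNorm_eq_l2norm {α β : Type*} [Fintype α] [Fintype β] [DecidableEq β]
    (X : Matrix α β ℝ) : opNorm X = ‖X‖ := rfl

lemma blk_mul' {N : ℕ} {n m p : Fin N → ℕ}
    (X : Matrix ((l : Fin N) × Fin (n l)) ((j : Fin N) × Fin (m j)) ℝ)
    (Y : Matrix ((l : Fin N) × Fin (m l)) ((j : Fin N) × Fin (p j)) ℝ)
    (l j : Fin N) : blk (X * Y) l j = ∑ k : Fin N, blk X l k * blk Y k j := by
  funext a b
  simp [blk, Matrix.mul_apply, Matrix.sum_apply, ← Finset.univ_sigma_univ, Finset.sum_sigma]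

/-- Lemma 3, Lemma 18 in Zhang et al.: the product of a `(c_x,γ_x)`-SED
matrix and a `(c_y,γ_y)`-SED matrix is `(N c_x c_y, min γ_x γ_y)`-SED. -/
theorem SED_mul
    {N : ℕ} (n m p : Fin N → ℕ) (dist : Fin N → Fin N → ℝ)
    (hdist_nonneg : ∀ l j, 0 ≤ dist l j)
    (hdist_symm : ∀ l j, dist l j = dist j l)
    (hdist_tri : ∀ l j k, dist l j ≤ dist l k + dist k j)
    (cx cy γx γy : ℝ) (hγx : 0 ≤ γx) (hγy : 0 ≤ γy)
    (X : Matrix ((l : Fin N) × Fin (n l)) ((j : Fin N) × Fin (m j)) ℝ)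
    (Y : Matrix ((l : Fin N) × Fin (m l)) ((j : Fin N) × Fin (p j)) ℝ)
    (hX : IsSED dist cx γx X) (hY : IsSED dist cy γy Y) :
    IsSED dist ((N : ℝ) * cx * cy) (min γx γy) (X * Y) := by
  intro l j
  set g := min γx γy with hg
  have hg_nonneg : 0 ≤ g := le_min hγx hγy
  rw [opNorm_eq_l2norm, blk_mul']
  calc ‖∑ k : Fin N, blk X l k * blk Y k j‖
      ≤ ∑ k : Fin N, ‖blk X l k * blk Y k j‖ := norm_sum_le _ _
    _ ≤ ∑ k : Fin N, cx * cy * Real.exp (-g * dist l j) := by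
        apply Finset.sum_le_sum
        intro k _
        have h1 : ‖blk X l k‖ ≤ cx * Real.exp (-γx * dist l k) := hX l k
        have h2 : ‖blk Y k j‖ ≤ cy * Real.exp (-γy * dist k j) := hY k j
        calc ‖blk X l k * blk Y k j‖
            ≤ ‖blk X l k‖ * ‖blk Y k j‖ := Matrix.l2_opNorm_mul _ _
          _ ≤ (cx * Real.exp (-γx * dist l k)) * (cy * Real.exp (-γy * dist k j)) := by
              apply mul_le_mul h1 h2 (norm_nonneg _)
              exact le_trans (norm_nonneg _) h1
          _ = cx * cy * (Real.exp (-γx * dist l k) * Real.exp (-γy * dist k j)) := by ring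
          _ ≤ cx * cy * Real.exp (-g * dist l j) := by
              have hcx : 0 ≤ cx := by
                have := hX l k
                nlinarith [norm_nonneg (blk X l k), Real.exp_pos (-γx * dist l k)]
              have hcy : 0 ≤ cy := by
                have := hY k j
                nlinarith [norm_nonneg (blk Y k j), Real.exp_pos (-γy * dist k j)]
              apply mul_le_mul_of_nonneg_left _ (by positivity)
              rw [← Real.exp_add]
              apply Real.exp_le_exp.mpr
              have h3 : g * dist l j ≤ g * (dist l k + dist k j) :=
                mul_le_mul_of_nonneg_left (hdist_tri l j k) hg_nonneg
              have h4 : g * dist l k ≤ γx * dist l k :=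
                mul_le_mul_of_nonneg_right (min_le_left _ _) (hdist_nonneg l k)
              have h5 : g * dist k j ≤ γy * dist k j :=
                mul_le_mul_of_nonneg_right (min_le_right _ _) (hdist_nonneg k j)
              nlinarith
    _ = (N : ℝ) * cx * cy * Real.exp (-g * dist l j) := by
        simp [Finset.sum_const, Finset.card_univ]
        ring
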